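/- For m ≥ 3 and i ≥ 4, the number of dominating sets of size i in the lollipop graph L_{m,3} equals C(m+2,i−1) + C(m,i−2) + C(m−1,i−2). -/

import Mathlib

/-- A finite set of vertices dominates the graph. -/
def Dominates {V : Type*} (G : SimpleGraph V) (U : Finset V) : Prop :=
  ∀ v : V, v ∈ U ∨ ∃ u ∈ U, G.Adj u v

/-- The number of dominating sets of size `i`. -/
noncomputable def domCount {V : Type*} [Fintype V] (G : SimpleGraph V) (i : ℕ) : ℕ :=
  Nat.card {U : Finset V // U.card = i ∧ Dominates G U}

/-- The asymmetric adjacency relation of the lollipop graph `L_{m,n}`: a complete graph on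
`Fin m`, a path on `Fin n`, and an edge joining vertex `0` of the complete graph to
the endpoint `0` of the path. -/
def lollipopRel {m n : ℕ} : (Fin m ⊕ Fin n) → (Fin m ⊕ Fin n) → Prop
  | .inl a, .inl b => a ≠ b
  | .inl a, .inr i => (a : ℕ) = 0 ∧ (i : ℕ) = 0
  | .inr i, .inr j => (i : ℕ) + 1 = (j : ℕ)
  | _, _ => False

/-- The `(m,n)`-lollipop graph. -/
def lollipop (m n : ℕ) : SimpleGraph (Fin m ⊕ Fin n) :=
  SimpleGraph.fromRel lollipopRel

/-!
Write `k₀` for the clique vertex attached to the path `p₀ p₁ p₂`. A set of at least four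
vertices always meets the clique, so it dominates exactly when it dominates `p₀` and `p₂`.
Either it contains `p₁`, and the other `i - 1` vertices are arbitrary among the remaining
`m + 2`; or it avoids `p₁`, contains `p₂`, and then either contains `p₀` (leaving `i - 2`
arbitrary clique vertices) or avoids `p₀` and contains `k₀` (leaving `i - 2` of the other
`m - 1` clique vertices).
-/

open Finset

theorem card_filter_card_eq_superset_disjoint {α : Type*} [Fintype α] [DecidableEq α]
    {S T : Finset α} (hST : Disjoint S T) {k : ℕ} (hk : #S ≤ k) :
    #{U : Finset α | #U = k ∧ S ⊆ U ∧ Disjoint T U} =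
      (Fintype.card α - #S - #T).choose (k - #S) := by
  have hfree : #(univ \ (S ∪ T)) = Fintype.card α - #S - #T := by
    rw [card_univ_sdiff, card_union_of_disjoint hST, Nat.sub_sub]
  rw [← hfree, ← card_powersetCard]
  refine card_nbij' (· \ S) (· ∪ S) ?_ ?_ ?_ ?_
  · intro U hU
    obtain ⟨-, hcard, hSU, hTU⟩ := mem_filter.1 hU
    refine mem_powersetCard.2 ⟨fun x hx => ?_, by rw [card_sdiff_of_subset hSU, hcard]⟩
    rw [mem_sdiff] at hx ⊢
    exact ⟨mem_univ x, by simpa [hx.2] using disjoint_right.1 hTU hx.1⟩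
  · intro V hV
    obtain ⟨⟨-, hVS, hVT⟩, hcard⟩ := by
      simpa only [mem_coe, mem_powersetCard, subset_sdiff, disjoint_union_right] using hV
    refine mem_filter.2 ⟨mem_univ _, ?_, subset_union_right,
      disjoint_union_right.2 ⟨hVT.symm, hST.symm⟩⟩
    rw [card_union_of_disjoint hVS, hcard]
    omega
  · intro U hU
    exact sdiff_union_of_subset (mem_filter.1 hU).2.2.1
  · intro V hV
    exact union_sdiff_cancel_right
      (disjoint_union_right.1 (subset_sdiff.1 (mem_powersetCard.1 hV).1).2).1

theorem exists_inl_mem_of_card_lt_card {α β : Type*} [Fintype β] {U : Finset (α ⊕ β)}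
    (hU : Fintype.card β < #U) : ∃ a, .inl a ∈ U := by
  obtain ⟨x, hxU, hx⟩ := exists_mem_notMem_of_card_lt_card (s := univ.map .inr) (by simpa)
  rcases x with a | b
  · exact ⟨a, hxU⟩
  · simp at hx

section Lollipop

variable {m n : ℕ}

@[simp] lemma lollipop_adj_inl_inl {a b : Fin m} :
    (lollipop m n).Adj (.inl a) (.inl b) ↔ a ≠ b := by
  simp [lollipop, lollipopRel, eq_comm]

@[simp] lemma lollipop_adj_inl_inr {a : Fin m} {j : Fin n} :
    (lollipop m n).Adj (.inl a) (.inr j) ↔ (a : ℕ) = 0 ∧ (j : ℕ) = 0 := by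
  simp [lollipop, lollipopRel]

@[simp] lemma lollipop_adj_inr_inl {a : Fin m} {j : Fin n} :
    (lollipop m n).Adj (.inr j) (.inl a) ↔ (a : ℕ) = 0 ∧ (j : ℕ) = 0 := by
  simp [lollipop, lollipopRel]

@[simp] lemma lollipop_adj_inr_inr {i j : Fin n} :
    (lollipop m n).Adj (.inr i) (.inr j) ↔ (i : ℕ) + 1 = j ∨ (j : ℕ) + 1 = i := by
  simp [lollipop, lollipopRel]
  omega

theorem dominates_lollipop_three_iff (hm : 2 ≤ m) (U : Finset (Fin m ⊕ Fin 3)) :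
    Dominates (lollipop m 3) U ↔
      (∃ a, .inl a ∈ U) ∧ (.inr 1 ∈ U ∨ .inr 2 ∈ U) ∧
        (.inr 0 ∈ U ∨ .inr 1 ∈ U ∨ .inl ⟨0, by omega⟩ ∈ U) := by
  have hclique : (∀ a : Fin m, .inl a ∈ U ∨ (∃ b, .inl b ∈ U ∧ ¬b = a) ∨
      .inr 0 ∈ U ∧ (a : ℕ) = 0) ↔ ∃ a, .inl a ∈ U := by
    refine ⟨fun h => ?_, fun ⟨b, hb⟩ a => ?_⟩
    · rcases h ⟨1, hm⟩ with h | ⟨b, hb, -⟩ | ⟨-, h⟩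
      exacts [⟨_, h⟩, ⟨b, hb⟩, absurd h one_ne_zero]
    · obtain rfl | hba := eq_or_ne b a
      exacts [Or.inl hb, Or.inr (Or.inl ⟨b, hb, hba⟩)]
  have hzero : (∃ a : Fin m, .inl a ∈ U ∧ (a : ℕ) = 0) ↔ .inl ⟨0, by omega⟩ ∈ U :=
    ⟨fun ⟨a, ha, h⟩ => (Fin.ext h : a = ⟨0, _⟩) ▸ ha, fun h => ⟨_, h, rfl⟩⟩
  simp [Dominates, Sum.forall, Sum.exists, Fin.forall_fin_succ, Fin.exists_fin_succ, hclique, hzero]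
  tauto

theorem dominates_lollipop_three_iff_of_four_le_card (hm : 2 ≤ m)
    {U : Finset (Fin m ⊕ Fin 3)} (hU : 4 ≤ #U) :
    Dominates (lollipop m 3) U ↔
      .inr 1 ∈ U ∨ (.inr 0 ∈ U ∧ .inr 2 ∈ U ∧ .inr 1 ∉ U) ∨
        (.inl ⟨0, by omega⟩ ∈ U ∧ .inr 2 ∈ U ∧ .inr 0 ∉ U ∧ .inr 1 ∉ U) := by
  have hclique : ∃ a, .inl a ∈ U := exists_inl_mem_of_card_lt_card (by simp; omega)
  rw [dominates_lollipop_three_iff hm]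
  tauto

-- `Disjoint ∅ U` puts the first term in the shape of `card_filter_card_eq_superset_disjoint`.
open Classical in
theorem card_dominating_lollipop_three {i : ℕ} (hm : 2 ≤ m) (hi : 4 ≤ i) :
    #{U : Finset (Fin m ⊕ Fin 3) | #U = i ∧ Dominates (lollipop m 3) U} =
      #{U : Finset (Fin m ⊕ Fin 3) | #U = i ∧ {.inr 1} ⊆ U ∧ Disjoint ∅ U} +
      #{U : Finset (Fin m ⊕ Fin 3) | #U = i ∧ {.inr 0, .inr 2} ⊆ U ∧ Disjoint {.inr 1} U} +
      #{U : Finset (Fin m ⊕ Fin 3) |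
        #U = i ∧ {.inl ⟨0, by omega⟩, .inr 2} ⊆ U ∧ Disjoint {.inr 0, .inr 1} U} := by
  rw [← card_union_of_disjoint, ← card_union_of_disjoint, ← filter_or, ← filter_or]
  all_goals simp only [disjoint_union_left, disjoint_filter, insert_subset_iff,
    singleton_subset_iff, disjoint_empty_left, disjoint_insert_left, disjoint_singleton_left]
  · refine congrArg card (filter_congr fun U _ => ?_)
    simp only [← and_or_left, and_true, or_assoc, and_assoc]
    exact and_congr_right fun hU => dominates_lollipop_three_iff_of_four_le_card hm (hU ▸ hi)
  all_goals tauto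

end Lollipop

theorem domCount_lollipop_three (m i : ℕ) (hm : 3 ≤ m) (hi : 4 ≤ i) :
    domCount (lollipop m 3) i =
      Nat.choose (m + 2) (i - 1) + Nat.choose m (i - 2) + Nat.choose (m - 1) (i - 2) := by
  classical
  rw [domCount, Nat.card_eq_fintype_card, Fintype.card_subtype,
    card_dominating_lollipop_three (by omega) hi,
    card_filter_card_eq_superset_disjoint (by simp) (by simp; omega),
    card_filter_card_eq_superset_disjoint (by simp) (by simp; omega),
    card_filter_card_eq_superset_disjoint (by simp) (by simp; omega)]
  simp
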